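/- In the Marker variant, let x ∈ X and j ≥ 1 and suppose the word x_0 x_1 ⋯ x_{l_j−1} belongs to C_j. Then every integer k ≥ 1 with x_{k+i} = x_i for all 0 ≤ i < l_j is a multiple of l_j; in particular the first return time of x to its l_j-cylinder is a multiple of l_j. -/

import Mathlib

open Filter MeasureTheory Topology

namespace EntDim

/-- The left shift `σ` on `A^ℤ`: `(shift x) i = x (i + 1)`. -/
def shift {A : Type*} (x : ℤ → A) : ℤ → A := fun i => x (i + 1)

/-- The shift by an integer `k`: `(shiftZ k x) i = x (i + k)`, i.e. `σ^k`. -/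
def shiftZ {A : Type*} (k : ℤ) (x : ℤ → A) : ℤ → A := fun i => x (i + k)

/-- A subshift: a nonempty closed shift-invariant subset of `A^ℤ`. -/
def IsSubshift {A : Type*} [TopologicalSpace A] (X : Set (ℤ → A)) : Prop :=
  X.Nonempty ∧ IsClosed X ∧ shift '' X = X

/-- `B_n(X)`: the set of words of length `n` occurring in `X`. -/
def wordsOf {A : Type*} (X : Set (ℤ → A)) (n : ℕ) : Set (Fin n → A) :=
  { w | ∃ x ∈ X, ∀ i : Fin n, w i = x ((i : ℕ) : ℤ) }

/-- `X` is minimal: every orbit is dense in `X`. -/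
def IsMinimal {A : Type*} [TopologicalSpace A] (X : Set (ℤ → A)) : Prop :=
  ∀ x ∈ X, X ⊆ closure { z | ∃ k : ℤ, z = shiftZ k x }

/-- `μ` is a shift-invariant Borel probability measure carried by `X`. -/
def IsInvProbOn {A : Type*} [MeasurableSpace A] (μ : Measure (ℤ → A))
    (X : Set (ℤ → A)) : Prop :=
  IsProbabilityMeasure μ ∧ MeasurePreserving shift μ μ ∧ μ X = 1

/-- The cylinder `[u] = {x ∈ X : x_i = u_i for 0 ≤ i < |u|}` of a finite word `u`. -/
def cylW {A : Type*} (X : Set (ℤ → A)) (u : List A) : Set (ℤ → A) :=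
  { x | x ∈ X ∧ ∀ i : Fin u.length, x ((i : ℕ) : ℤ) = u.get i }

/-- The `n`-cylinder `P_n(x) = {y ∈ X : y_i = x_i for 0 ≤ i < n}` of a point `x`. -/
def cylPt {A : Type*} (X : Set (ℤ → A)) (x : ℤ → A) (n : ℕ) : Set (ℤ → A) :=
  { y | y ∈ X ∧ ∀ i : ℕ, i < n → y (i : ℤ) = x (i : ℤ) }

/-- The first return time `R_n(x) = inf {k ≥ 1 : x_{k+i} = x_i for 0 ≤ i < n}`
(with the junk value `0` if no such `k` exists). -/
noncomputable def retTime {A : Type*} (x : ℤ → A) (n : ℕ) : ℕ :=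
  sInf { k : ℕ | 1 ≤ k ∧ ∀ i : ℕ, i < n → x ((k : ℤ) + (i : ℕ)) = x ((i : ℕ) : ℤ) }

/-- The sequence of pairs `(l_j, N_j)`, `j ≥ 1`, with `l_1 = l1`, `N_1 = 2^⌊√l1⌋`,
`l_{j+1} = l_j · N_j` and `N_{j+1} = (⌊√N_j⌋)!`.  (The value at `j = 0` is junk.) -/
def lN (l1 : ℕ) : ℕ → ℕ × ℕ
  | 0 => (0, 0)
  | 1 => (l1, 2 ^ Nat.sqrt l1)
  | j + 2 => ((lN l1 (j + 1)).1 * (lN l1 (j + 1)).2, Nat.factorial (Nat.sqrt (lN l1 (j + 1)).2))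

/-- The length `l_j` of the words of `C_j`. -/
def lseq (l1 j : ℕ) : ℕ := (lN l1 j).1

/-- The cardinality `N_j` of `C_j`. -/
def Nseq (l1 j : ℕ) : ℕ := (lN l1 j).2

/-- `i ∈ P_j = {2} ∪ {m² : 2 ≤ m ≤ ⌊√N⌋}` (1-based position `i`, where `N = N_j`):
the permuted (unstable) positions. -/
def PermutedIdx (N i : ℕ) : Prop :=
  i = 2 ∨ ∃ m : ℕ, 2 ≤ m ∧ m ≤ Nat.sqrt N ∧ i = m ^ 2

/-- The data of the Construction: a positive integer `l1` and ordered lists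
`C j` (`j ≥ 1`) of distinct binary words (`C 0` is irrelevant), where `C 1` consists of
`N_1 = 2^⌊√l1⌋` words of length `l1`, `C j` consists of `N_j` words of length `l_j`, and
`C (j+1)` is the set of all concatenations of the words of `C j` reordered by a
permutation preserving `P_j` and fixing every position outside `P_j`. -/
structure Construction where
  l1 : ℕ
  hl1 : 0 < l1
  C : ℕ → List (List Bool)
  nodup : ∀ j, 1 ≤ j → (C j).Nodup
  length_eq : ∀ j, 1 ≤ j → (C j).length = Nseq l1 j
  wordLength : ∀ j, 1 ≤ j → ∀ w ∈ C j, w.length = lseq l1 j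
  mem_succ : ∀ j, 1 ≤ j → ∀ w : List Bool,
    w ∈ C (j + 1) ↔
      ∃ τ : Equiv.Perm (Fin (C j).length),
        (∀ i : Fin (C j).length, ¬ PermutedIdx (Nseq l1 j) ((i : ℕ) + 1) → τ i = i) ∧
        (∀ i : Fin (C j).length, PermutedIdx (Nseq l1 j) ((i : ℕ) + 1) →
            PermutedIdx (Nseq l1 j) ((τ i : ℕ) + 1)) ∧
        w = (List.ofFn fun i : Fin (C j).length => (C j).get (τ i)).flatten

/-- The subshift `X` of the Construction: all `x ∈ {0,1}^ℤ` each of whose finite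
subwords occurs as a subword of some word in some `C j`. -/
def Construction.space (c : Construction) : Set (ℤ → Bool) :=
  { x | ∀ (a : ℤ) (n : ℕ), ∃ j, 1 ≤ j ∧ ∃ w ∈ c.C j,
      (List.ofFn fun i : Fin n => x (a + (i : ℕ))) <:+: w }

/-- The offset `t_j(x) ∈ {0, …, l_j − 1}` of the decomposition of `x` into `C j`-words
(defined as an infimum; it is unique in the Marker variant). -/
noncomputable def Construction.tOffset (c : Construction) (j : ℕ) (x : ℤ → Bool) : ℕ :=
  sInf { t : ℕ | t < lseq c.l1 j ∧ ∀ m : ℤ,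
    (List.ofFn fun i : Fin (lseq c.l1 j) =>
      x (m * (lseq c.l1 j : ℤ) - (t : ℤ) + (i : ℕ))) ∈ c.C j }

/-- The Marker variant: every word of `C 1` begins with `001`, and `00` occurs in each
word of `C 1` only as its prefix. -/
structure MarkerConstruction extends Construction where
  marker_prefix : ∀ w ∈ C 1, [false, false, true] <+: w
  marker_unique : ∀ w ∈ C 1, ∀ n : ℕ, [false, false] <+: w.drop n → n = 0

end EntDim

/-!
Induction on `j`. For `j = 1`, the marker `001` can only start a `C₁`-block: inside a block `00`
occurs only as its prefix, and a `00` straddling two blocks is followed by the second `0` of the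
next block's marker. For the inductive step, an occurrence of `u ∈ C_{j+1}` is `C_j`-aligned by
induction applied to its first block, which is the first word of `C_j`; since position `1` is never
permuted and the words of `C_j` are distinct, that word is the first block and no other block of
any word of `C_{j+1}`, so the occurrence is `C_{j+1}`-aligned. Two occurrences of
`x₀ ⋯ x_{l_j - 1}` at distance `k` inside one word of some `C_J` then force `l_j ∣ k`.
-/

namespace List

variable {α : Type*} {L : List (List α)} {l : ℕ}

theorem length_flatten_of_forall_length_eq (h : ∀ v ∈ L, v.length = l) :
    L.flatten.length = L.length * l := by
  rw [length_flatten, map_congr_left h, map_const', sum_replicate, smul_eq_mul]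

theorem lt_length_of_mul_add_lt_length_flatten (h : ∀ v ∈ L, v.length = l) {a r : ℕ}
    (hp : a * l + r < L.flatten.length) : a < L.length := by
  rw [length_flatten_of_forall_length_eq h] at hp
  exact Nat.lt_of_mul_lt_mul_right (lt_of_le_of_lt (Nat.le_add_right _ _) hp)

theorem drop_mul_add_flatten (h : ∀ v ∈ L, v.length = l) {a r : ℕ} (ha : a < L.length)
    (hr : r ≤ l) : L.flatten.drop (a * l + r) = L[a].drop r ++ (L.drop (a + 1)).flatten := by
  induction L generalizing a with
  | nil => simp at ha
  | cons v L ih =>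
    have hv : v.length = l := h v mem_cons_self
    cases a with
    | zero => simp [drop_append_of_le_length (hv ▸ hr)]
    | succ a =>
      have ih' := ih (fun w hw => h w (mem_cons_of_mem _ hw)) (Nat.lt_of_succ_lt_succ ha)
      rw [flatten_cons, show (a + 1) * l + r = l + (a * l + r) by ring, ← drop_drop,
        drop_left' hv, ih']
      simp

theorem getElem_isPrefix_drop_mul_flatten (h : ∀ v ∈ L, v.length = l) {a : ℕ}
    (ha : a < L.length) : L[a] <+: L.flatten.drop (a * l) := by
  simpa using (drop_mul_add_flatten h ha (Nat.zero_le _)).symm ▸ prefix_append L[a] _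

theorem ofFn_isPrefix_ofFn (f : ℕ → α) {n m : ℕ} (h : n ≤ m) :
    (ofFn fun i : Fin n => f i) <+: ofFn fun i : Fin m => f i := by
  rw [prefix_iff_eq_take]
  refine ext_getElem (by simp; omega) fun i h₁ h₂ => ?_
  simp

theorem drop_ofFn_add (f : ℕ → α) (k n : ℕ) :
    (ofFn fun i : Fin (k + n) => f i).drop k = ofFn fun i : Fin n => f (k + i) :=
  ext_getElem (by simp) fun i h₁ h₂ => by simp

end List

namespace EntDim

open List Computability

theorem Nseq_pos (l1 : ℕ) : ∀ {j : ℕ}, 1 ≤ j → 0 < Nseq l1 j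
  | 1, _ => Nat.two_pow_pos _
  | _ + 2, _ => Nat.factorial_pos _

theorem lseq_succ (l1 : ℕ) {j : ℕ} (hj : 1 ≤ j) : lseq l1 (j + 1) = lseq l1 j * Nseq l1 j := by
  obtain ⟨j, rfl⟩ := Nat.exists_eq_add_of_le' hj
  rfl

theorem lseq_pos {l1 : ℕ} (hl1 : 0 < l1) {j : ℕ} (hj : 1 ≤ j) : 0 < lseq l1 j := by
  induction j, hj using Nat.le_induction with
  | base => exact hl1
  | succ j hj ih => rw [lseq_succ l1 hj]; exact Nat.mul_pos ih (Nseq_pos l1 hj)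

theorem lseq_le_lseq (l1 : ℕ) {j J : ℕ} (hj : 1 ≤ j) (hJ : j ≤ J) : lseq l1 j ≤ lseq l1 J := by
  induction J, hJ using Nat.le_induction with
  | base => exact le_rfl
  | succ J hJ ih =>
    rw [lseq_succ l1 (hj.trans hJ)]
    exact ih.trans (Nat.le_mul_of_pos_right _ (Nseq_pos l1 (hj.trans hJ)))

theorem not_permutedIdx_one (N : ℕ) : ¬ PermutedIdx N 1 := by
  rintro (h | ⟨m, hm, -, h⟩) <;> nlinarith

namespace Construction

variable (c : Construction)

def words (j : ℕ) : Language Bool := {w | w ∈ c.C j}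

variable {c}

theorem exists_perm_of_mem_succ {j : ℕ} (hj : 1 ≤ j) {u : List Bool} (hu : u ∈ c.C (j + 1)) :
    ∃ B : List (List Bool), B ~ c.C j ∧ B[0]? = (c.C j)[0]? ∧ u = B.flatten := by
  obtain ⟨τ, hfix, -, rfl⟩ := (c.mem_succ j hj u).1 hu
  refine ⟨_, (τ.ofFn_comp_perm (c.C j).get).trans (Perm.of_eq (ofFn_get _)), ?_, rfl⟩
  rw [List.getElem?_ofFn]
  split_ifs with h
  · rw [Function.comp_apply, hfix ⟨0, h⟩ (not_permutedIdx_one _), getElem?_eq_getElem h]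
    rfl
  · rw [getElem?_eq_none (Nat.le_of_not_lt h)]

theorem words_succ_le_kstar {j : ℕ} (hj : 1 ≤ j) : c.words (j + 1) ≤ (c.words j)∗ := by
  intro u hu
  obtain ⟨B, hB, -, rfl⟩ := exists_perm_of_mem_succ hj hu
  exact Language.join_mem_kstar fun v hv => hB.mem_iff.1 hv

theorem kstar_words_le_of_le {j J : ℕ} (hj : 1 ≤ j) (hJ : j ≤ J) :
    (c.words J)∗ ≤ (c.words j)∗ := by
  induction J, hJ using Nat.le_induction with
  | base => exact le_rfl
  | succ J hJ ih =>
    calc (c.words (J + 1))∗ ≤ (c.words J)∗∗ := kstar_mono (words_succ_le_kstar (hj.trans hJ))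
      _ = (c.words J)∗ := kstar_idem _
      _ ≤ (c.words j)∗ := ih

end Construction

theorem Construction.lseq_succ_dvd_of_isPrefix_drop (c : Construction) {j : ℕ} (hj : 1 ≤ j)
    {W u : List Bool} (hW : W ∈ (c.words (j + 1))∗) (hu : u ∈ c.C (j + 1)) {p : ℕ}
    (hp : u <+: W.drop p) (hdvd : lseq c.l1 j ∣ p) : lseq c.l1 (j + 1) ∣ p := by
  obtain ⟨L, rfl, hL⟩ := Language.mem_kstar.1 hW
  obtain ⟨q, rfl⟩ := hdvd
  set l := lseq c.l1 j
  set N := Nseq c.l1 j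
  have hlN : lseq c.l1 (j + 1) = l * N := lseq_succ c.l1 hj
  have hN : 0 < N := Nseq_pos c.l1 hj
  have hlen : ∀ v ∈ L, v.length = l * N := fun v hv =>
    (c.wordLength _ (by omega) v (hL v hv)).trans hlN
  have hq : l * q = q / N * (l * N) + q % N * l := by
    conv_lhs => rw [← Nat.div_add_mod q N]
    ring
  have ha : q / N < L.length := by
    refine lt_length_of_mul_add_lt_length_flatten hlen (r := q % N * l) ?_
    have hu_pos : 0 < u.length := c.wordLength _ (by omega) u hu ▸ lseq_pos c.hl1 (by omega)
    have := hp.length_le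
    rw [length_drop] at this
    omega
  obtain ⟨Bu, hBu, hBu0, rfl⟩ := c.exists_perm_of_mem_succ hj hu
  obtain ⟨Ba, hBa, hBa0, hLa⟩ := c.exists_perm_of_mem_succ hj (hL _ (getElem_mem ha))
  have hBlen : ∀ v ∈ Ba, v.length = l := fun v hv => c.wordLength j hj v (hBa.mem_iff.1 hv)
  have hr : q % N < Ba.length := by rw [hBa.length_eq, c.length_eq j hj]; exact Nat.mod_lt q hN
  have h0 : 0 < Bu.length := by rw [hBu.length_eq, c.length_eq j hj]; exact hN
  have hBa_r : Ba[q % N] <+: L.flatten.drop (l * q) := by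
    rw [hq, drop_mul_add_flatten hlen ha (by nlinarith [Nat.mod_lt q hN]), hLa]
    exact (getElem_isPrefix_drop_mul_flatten hBlen hr).trans (prefix_append _ _)
  have hBu_0 : Bu[0] <+: L.flatten.drop (l * q) := by
    refine IsPrefix.trans ?_ hp
    simpa using getElem_isPrefix_drop_mul_flatten
      (fun v hv => c.wordLength j hj v (hBu.mem_iff.1 hv)) h0
  have heq : Ba[q % N] = Ba[0] := by
    have h1 : Ba[0]? = Bu[0]? := hBa0.trans hBu0.symm
    rw [getElem?_eq_getElem (by omega), getElem?_eq_getElem h0, Option.some_inj] at h1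
    rw [h1]
    refine (prefix_of_prefix_length_le hBa_r hBu_0 ?_).eq_of_length ?_ <;>
      rw [hBlen _ (getElem_mem _), c.wordLength j hj _ (hBu.mem_iff.1 (getElem_mem _))]
  have hr0 : q % N = 0 := ((hBa.nodup_iff.2 (c.nodup j hj)).getElem_inj_iff).1 heq
  rw [hlN, hq, hr0, zero_mul, add_zero]
  exact Dvd.intro_left _ rfl

theorem MarkerConstruction.l1_dvd_of_isPrefix_drop (c : MarkerConstruction) {W : List Bool}
    (hW : W ∈ (c.words 1)∗) {p : ℕ} (hp : [false, false, true] <+: W.drop p) : c.l1 ∣ p := by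
  obtain ⟨L, rfl, hL⟩ := Language.mem_kstar.1 hW
  have hlen : ∀ v ∈ L, v.length = c.l1 := fun v hv => c.wordLength 1 le_rfl v (hL v hv)
  obtain ⟨a, r, hr, rfl⟩ : ∃ a r, r < c.l1 ∧ p = a * c.l1 + r :=
    ⟨p / c.l1, p % c.l1, Nat.mod_lt _ c.hl1, (Nat.div_add_mod' p c.l1).symm⟩
  have ha : a < L.length := by
    refine lt_length_of_mul_add_lt_length_flatten hlen (r := r) ?_
    have := hp.length_le
    simp only [length_cons, length_nil, length_drop] at this
    omega
  rw [drop_mul_add_flatten hlen ha hr.le] at hp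
  have hff : [false, false] <+: [false, false, true] := ⟨[true], rfl⟩
  suffices r = 0 by simp [this]
  rcases Nat.lt_or_ge (r + 1) c.l1 with hr2 | hr1
  · refine c.marker_unique L[a] (hL _ (getElem_mem ha)) r ?_
    refine prefix_of_prefix_length_le (hff.trans hp) (prefix_append _ _) ?_
    simp [hlen _ (getElem_mem ha)]
    omega
  -- the marker would straddle two `C 1`-blocks, whose second one begins with `00`
  exfalso
  obtain ⟨b, hb⟩ : ∃ b, L[a].drop r = [b] :=
    (length_eq_one_iff (l := L[a].drop r)).1 (by rw [length_drop, hlen _ (getElem_mem ha)]; omega)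
  rw [hb, singleton_append] at hp
  replace hp := (cons_prefix_cons.1 hp).2
  rcases hT : L.drop (a + 1) with _ | ⟨v, L'⟩
  · simp [hT] at hp
  have hv : [false, false, true] <+: v :=
    c.marker_prefix v (hL v (mem_of_mem_drop (hT ▸ mem_cons_self)))
  rw [hT, flatten_cons] at hp
  exact absurd (prefix_of_prefix_length_le hp ((hff.trans hv).trans (prefix_append _ _)) le_rfl)
    (by decide)

theorem MarkerConstruction.lseq_dvd_of_isPrefix_drop (c : MarkerConstruction) {j : ℕ}
    (hj : 1 ≤ j) {W u : List Bool} (hW : W ∈ (c.words j)∗) (hu : u ∈ c.C j) {p : ℕ}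
    (hp : u <+: W.drop p) : lseq c.l1 j ∣ p := by
  induction j, hj using Nat.le_induction generalizing W u p with
  | base => exact c.l1_dvd_of_isPrefix_drop hW ((c.marker_prefix u hu).trans hp)
  | succ j hj ih =>
    refine c.lseq_succ_dvd_of_isPrefix_drop hj hW hu hp ?_
    obtain ⟨B, hB, -, rfl⟩ := c.exists_perm_of_mem_succ hj hu
    have h0 : 0 < B.length := by rw [hB.length_eq, c.length_eq j hj]; exact Nseq_pos c.l1 hj
    refine ih (c.kstar_words_le_of_le hj (Nat.le_succ j) hW) (hB.mem_iff.1 (getElem_mem h0)) ?_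
    refine IsPrefix.trans ?_ hp
    simpa using getElem_isPrefix_drop_mul_flatten
      (fun v hv => c.wordLength j hj v (hB.mem_iff.1 hv)) h0

theorem dvd_retTime {A : Type*} {x : ℤ → A} {n d : ℕ}
    (h : ∀ k : ℕ, 1 ≤ k → (∀ i : ℕ, i < n → x ((k : ℤ) + (i : ℕ)) = x ((i : ℕ) : ℤ)) → d ∣ k) :
    d ∣ retTime x n := by
  unfold retTime
  rcases Set.eq_empty_or_nonempty
      {k : ℕ | 1 ≤ k ∧ ∀ i : ℕ, i < n → x ((k : ℤ) + (i : ℕ)) = x ((i : ℕ) : ℤ)} with hS | hS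
  · rw [hS, Nat.sInf_empty]
    exact dvd_zero d
  · exact h _ (Nat.sInf_mem hS).1 (Nat.sInf_mem hS).2

theorem MarkerConstruction.lseq_dvd_of_periodic (c : MarkerConstruction) {x : ℤ → Bool}
    (hx : x ∈ c.space) {j : ℕ} (hj : 1 ≤ j)
    (h0 : (List.ofFn fun i : Fin (lseq c.l1 j) => x ((i : ℕ) : ℤ)) ∈ c.C j) {k : ℕ} (hk : 1 ≤ k)
    (hper : ∀ i : ℕ, i < lseq c.l1 j → x ((k : ℤ) + (i : ℕ)) = x ((i : ℕ) : ℤ)) :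
    lseq c.l1 j ∣ k := by
  set l := lseq c.l1 j
  let f : ℕ → Bool := fun n => x n
  obtain ⟨J, hJ, W, hW, s, t, hst⟩ := hx 0 (k + l)
  simp only [zero_add] at hst
  have hw : (ofFn fun i : Fin (k + l) => f i) <+: W.drop s.length := by
    rw [← hst, append_assoc, drop_left]
    exact prefix_append _ _
  have hu : (ofFn fun i : Fin l => f i) <+: (ofFn fun i : Fin (k + l) => f i).drop k := by
    have hshift : (ofFn fun i : Fin l => f (k + i)) = ofFn fun i : Fin l => f i := by
      congr 1
      funext i
      simpa [f] using hper i i.2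
    rw [drop_ofFn_add, hshift]
  have hjJ : j ≤ J := by
    by_contra! hJj
    have := hw.length_le
    rw [length_ofFn, length_drop, c.wordLength J hJ W hW] at this
    have := lseq_le_lseq c.l1 hJ hJj.le
    omega
  have hWj : W ∈ (c.words j)∗ :=
    c.kstar_words_le_of_le hj hjJ ((le_kstar : c.words J ≤ (c.words J)∗) hW)
  have h1 := c.lseq_dvd_of_isPrefix_drop hj hWj h0 ((ofFn_isPrefix_ofFn f (by omega)).trans hw)
  have h2 := c.lseq_dvd_of_isPrefix_drop hj hWj h0 (drop_drop ▸ hu.trans (hw.drop k))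
  exact (Nat.dvd_add_right h1).1 h2

/-- Marker variant: if `x ∈ X` and `x_0 ⋯ x_{l_j−1} ∈ C_j`, then every
return time of `x` to its `l_j`-cylinder is a multiple of `l_j`; in particular the first
return time `R_{l_j}(x)` is a multiple of `l_j`. -/
theorem statement8 (c : MarkerConstruction) (x : ℤ → Bool)
    (hx : x ∈ c.toConstruction.space) (j : ℕ) (hj : 1 ≤ j)
    (h0 : (List.ofFn fun i : Fin (lseq c.l1 j) => x ((i : ℕ) : ℤ)) ∈ c.C j) :
    (∀ k : ℕ, 1 ≤ k →
      (∀ i : ℕ, i < lseq c.l1 j → x ((k : ℤ) + (i : ℕ)) = x ((i : ℕ) : ℤ)) →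
      lseq c.l1 j ∣ k) ∧
    lseq c.l1 j ∣ retTime x (lseq c.l1 j) := by
  have hdvd : ∀ k : ℕ, 1 ≤ k →
      (∀ i : ℕ, i < lseq c.l1 j → x ((k : ℤ) + (i : ℕ)) = x ((i : ℕ) : ℤ)) → lseq c.l1 j ∣ k :=
    fun _ hk hper => c.lseq_dvd_of_periodic hx hj h0 hk hper
  exact ⟨hdvd, dvd_retTime hdvd⟩

end EntDim
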